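/- Let M and N be complex n×n matrices with A = M + N, let α > 0 and ω ∈ [0,2), and set H = αI + M, S = αI + N. Suppose M is Hermitian positive definite and N is either Hermitian positive semidefinite or skew-Hermitian (N* = −N). Then A, H and S are invertible, the GADI iteration matrix T_F(α,ω) = S⁻¹H⁻¹(α²I + MN − (1−ω)αA) has spectral radius ρ(T_F(α,ω)) < 1, and for every b and every initial vector x⁰ the GADI iterates x^{k+1} = T_F(α,ω)x^k + (2−ω)α S⁻¹H⁻¹ b converge to the unique solution x of Ax = b. -/

import Mathlib

open Matrix Filter Set Topology
open scoped ComplexOrder ENNReal InnerProductSpace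

/-!
Write `H = αI + M`, `S = αI + N`, `P = αI − M`, `Q = αI − N`. The numerator of the GADI matrix
splits as `(1 − ω/2) P Q + (ω/2) H S`, so every eigenvalue `λ` of `T_F(α,ω)` has the form
`λ = (1 − ω/2) μ + ω/2` where `P Q v = μ H S v` for some `v ≠ 0`. Since `H` and `P` commute,
`P y = μ S v` with `H y = Q v`. For an accretive `B` the Cayley-type estimate
`‖(αI − B) x‖ ≤ ‖(αI + B) x‖` holds (strictly when `B` is strictly accretive and `x ≠ 0`), hence
`|μ| ‖S v‖ = ‖P y‖ < ‖H y‖ = ‖Q v‖ ≤ ‖S v‖`, i.e. `|μ| < 1` and so `|λ| < 1`. Convergence of the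
iterates then follows from Gelfand's formula, because the solution of `A x = b` is a fixed point of
the iteration.
-/

/-- The GADI iteration matrix `T_F(α,ω) = S⁻¹ H⁻¹ (α² I + M N − (1−ω) α A)`
for complex matrices, with `A = M + N`, `H = α I + M`, `S = α I + N`. -/
noncomputable def gadiTF {n : ℕ} (M N : Matrix (Fin n) (Fin n) ℂ) (α ω : ℝ) :
    Matrix (Fin n) (Fin n) ℂ :=
  ((α : ℂ) • 1 + N)⁻¹ * ((α : ℂ) • 1 + M)⁻¹ *
    (((α : ℂ) ^ 2) • 1 + M * N - (((1 - ω) * α : ℝ) : ℂ) • (M + N))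

section InnerProduct

variable {𝕜 E : Type*} [RCLike 𝕜] [NormedAddCommGroup E] [InnerProductSpace 𝕜 E]

theorem norm_sub_le_norm_add_of_re_inner_nonneg {x y : E} (h : 0 ≤ RCLike.re ⟪x, y⟫_𝕜) :
    ‖x - y‖ ≤ ‖x + y‖ := by
  rw [← sq_le_sq₀ (norm_nonneg _) (norm_nonneg _), norm_sub_sq (𝕜 := 𝕜), norm_add_sq (𝕜 := 𝕜)]
  linarith

theorem norm_sub_lt_norm_add_of_re_inner_pos {x y : E} (h : 0 < RCLike.re ⟪x, y⟫_𝕜) :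
    ‖x - y‖ < ‖x + y‖ := by
  rw [← sq_lt_sq₀ (norm_nonneg _) (norm_nonneg _), norm_sub_sq (𝕜 := 𝕜), norm_add_sq (𝕜 := 𝕜)]
  linarith

end InnerProduct

namespace Matrix

variable {𝕜 ι : Type*} [RCLike 𝕜] [Fintype ι]

def IsAccretive (B : Matrix ι ι 𝕜) : Prop :=
  ∀ x : ι → 𝕜, 0 ≤ RCLike.re (star x ⬝ᵥ (B *ᵥ x))

def IsStrictlyAccretive (B : Matrix ι ι 𝕜) : Prop :=
  ∀ x : ι → 𝕜, x ≠ 0 → 0 < RCLike.re (star x ⬝ᵥ (B *ᵥ x))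

variable {B C : Matrix ι ι 𝕜}

theorem PosSemidef.isAccretive (hB : B.PosSemidef) : B.IsAccretive :=
  hB.re_dotProduct_nonneg

theorem PosDef.isStrictlyAccretive (hB : B.PosDef) : B.IsStrictlyAccretive :=
  fun _ hx => hB.re_dotProduct_pos hx

theorem isAccretive_of_conjTranspose_eq_neg (hB : Bᴴ = -B) : B.IsAccretive := by
  intro x
  have hconj : star (star x ⬝ᵥ (B *ᵥ x)) = star x ⬝ᵥ (Bᴴ *ᵥ x) := by
    rw [star_dotProduct, star_star, star_mulVec, dotProduct_mulVec]
  rw [hB, neg_mulVec, dotProduct_neg] at hconj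
  have hre := congrArg RCLike.re hconj
  rw [RCLike.star_def, RCLike.conj_re, map_neg] at hre
  linarith

theorem IsStrictlyAccretive.isAccretive (hB : B.IsStrictlyAccretive) : B.IsAccretive := by
  intro x
  rcases eq_or_ne x 0 with rfl | hx
  · simp
  · exact (hB x hx).le

theorem IsStrictlyAccretive.add (hB : B.IsStrictlyAccretive) (hC : C.IsAccretive) :
    (B + C).IsStrictlyAccretive := fun x hx => by
  rw [add_mulVec, dotProduct_add, map_add]
  exact add_pos_of_pos_of_nonneg (hB x hx) (hC x)

theorem inner_toLp_mulVec (B : Matrix ι ι 𝕜) (x : ι → 𝕜) :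
    ⟪WithLp.toLp 2 x, WithLp.toLp 2 (B *ᵥ x)⟫_𝕜 = star x ⬝ᵥ (B *ᵥ x) := by
  rw [EuclideanSpace.inner_toLp_toLp, dotProduct_comm]

theorem IsStrictlyAccretive.mulVec_ne_zero (hB : B.IsStrictlyAccretive) {x : ι → 𝕜}
    (hx : x ≠ 0) : B *ᵥ x ≠ 0 := fun h0 => by
  simpa [h0] using hB x hx

theorem re_inner_toLp_smul_mulVec (α : ℝ) (B : Matrix ι ι 𝕜) (x : ι → 𝕜) :
    RCLike.re ⟪WithLp.toLp 2 ((α : 𝕜) • x), WithLp.toLp 2 (B *ᵥ x)⟫_𝕜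
      = α * RCLike.re (star x ⬝ᵥ (B *ᵥ x)) := by
  rw [WithLp.toLp_smul, inner_smul_left, inner_toLp_mulVec, RCLike.conj_ofReal,
    RCLike.re_ofReal_mul]

variable [DecidableEq ι]

theorem smul_one_add_mulVec (α : 𝕜) (B : Matrix ι ι 𝕜) (x : ι → 𝕜) :
    (α • 1 + B) *ᵥ x = α • x + B *ᵥ x := by
  rw [add_mulVec, smul_mulVec, one_mulVec]

theorem smul_one_sub_mulVec (α : 𝕜) (B : Matrix ι ι 𝕜) (x : ι → 𝕜) :
    (α • 1 - B) *ᵥ x = α • x - B *ᵥ x := by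
  rw [sub_mulVec, smul_mulVec, one_mulVec]

theorem IsAccretive.smul_one_add (hB : B.IsAccretive) {α : ℝ} (hα : 0 < α) :
    ((α : 𝕜) • 1 + B).IsStrictlyAccretive := fun x hx => by
  rw [smul_one_add_mulVec, dotProduct_add, map_add, dotProduct_smul, smul_eq_mul,
    RCLike.re_ofReal_mul]
  have hxx : 0 < RCLike.re (star x ⬝ᵥ x) := by
    simpa using (RCLike.pos_iff.mp (dotProduct_star_self_pos_iff.mpr hx)).1
  exact add_pos_of_pos_of_nonneg (mul_pos hα hxx) (hB x)

theorem IsStrictlyAccretive.isUnit_det (hB : B.IsStrictlyAccretive) : IsUnit B.det :=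
  isUnit_iff_ne_zero.mpr fun hdet =>
    let ⟨_, hx, h0⟩ := exists_mulVec_eq_zero_iff.mpr hdet
    hB.mulVec_ne_zero hx h0

theorem IsAccretive.norm_smul_one_sub_mulVec_le (hB : B.IsAccretive) {α : ℝ} (hα : 0 ≤ α)
    (x : ι → 𝕜) :
    ‖WithLp.toLp 2 (((α : 𝕜) • 1 - B) *ᵥ x)‖ ≤ ‖WithLp.toLp 2 (((α : 𝕜) • 1 + B) *ᵥ x)‖ := by
  rw [smul_one_sub_mulVec, smul_one_add_mulVec, WithLp.toLp_sub, WithLp.toLp_add]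
  refine norm_sub_le_norm_add_of_re_inner_nonneg (𝕜 := 𝕜) ?_
  rw [re_inner_toLp_smul_mulVec]
  exact mul_nonneg hα (hB x)

theorem IsStrictlyAccretive.norm_smul_one_sub_mulVec_lt (hB : B.IsStrictlyAccretive) {α : ℝ}
    (hα : 0 < α) {x : ι → 𝕜} (hx : x ≠ 0) :
    ‖WithLp.toLp 2 (((α : 𝕜) • 1 - B) *ᵥ x)‖ < ‖WithLp.toLp 2 (((α : 𝕜) • 1 + B) *ᵥ x)‖ := by
  rw [smul_one_sub_mulVec, smul_one_add_mulVec, WithLp.toLp_sub, WithLp.toLp_add]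
  refine norm_sub_lt_norm_add_of_re_inner_pos (𝕜 := 𝕜) ?_
  rw [re_inner_toLp_smul_mulVec]
  exact mul_pos hα (hB x hx)

theorem adi_eigenvalue_norm_lt_one {M N : Matrix ι ι 𝕜} (hM : M.IsStrictlyAccretive)
    (hN : N.IsAccretive) {α : ℝ} (hα : 0 < α) {v : ι → 𝕜} (hv : v ≠ 0) {μ : 𝕜}
    (h : (((α : 𝕜) • 1 - M) * ((α : 𝕜) • 1 - N)) *ᵥ v
      = μ • ((((α : 𝕜) • 1 + M) * ((α : 𝕜) • 1 + N)) *ᵥ v)) : ‖μ‖ < 1 := by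
  set H := (α : 𝕜) • 1 + M
  set P := (α : 𝕜) • 1 - M
  have hH : IsUnit H.det := (hM.isAccretive.smul_one_add hα).isUnit_det
  have hSv : ((α : 𝕜) • 1 + N) *ᵥ v ≠ 0 := (hN.smul_one_add hα).mulVec_ne_zero hv
  set y := H⁻¹ *ᵥ (((α : 𝕜) • 1 - N) *ᵥ v)
  have hHy : H *ᵥ y = ((α : 𝕜) • 1 - N) *ᵥ v := by
    rw [mulVec_mulVec, mul_nonsing_inv _ hH, one_mulVec]
  have hPH : Commute P H :=
    ((Commute.one_right _).smul_right _).add_right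
      (((Commute.one_left M).smul_left _).sub_left (Commute.refl M))
  have hPy : P *ᵥ y = μ • ((α : 𝕜) • 1 + N) *ᵥ v := by
    apply mulVec_injective_iff_isUnit.mpr ((isUnit_iff_isUnit_det H).mpr hH)
    rw [mulVec_mulVec, ← hPH.eq, ← mulVec_mulVec, hHy, mulVec_mulVec, h, mulVec_smul,
      mulVec_mulVec]
  rcases eq_or_ne y 0 with hy | hy
  · rw [hy, mulVec_zero, eq_comm, smul_eq_zero] at hPy
    simp [hPy.resolve_right hSv]
  · have hlt : ‖μ‖ * ‖WithLp.toLp 2 (((α : 𝕜) • 1 + N) *ᵥ v)‖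
        < 1 * ‖WithLp.toLp 2 (((α : 𝕜) • 1 + N) *ᵥ v)‖ :=
      calc ‖μ‖ * ‖WithLp.toLp 2 (((α : 𝕜) • 1 + N) *ᵥ v)‖ = ‖WithLp.toLp 2 (P *ᵥ y)‖ := by
            rw [hPy, WithLp.toLp_smul, norm_smul]
        _ < ‖WithLp.toLp 2 (H *ᵥ y)‖ := hM.norm_smul_one_sub_mulVec_lt hα hy
        _ ≤ 1 * ‖WithLp.toLp 2 (((α : 𝕜) • 1 + N) *ᵥ v)‖ := by
            rw [hHy, one_mul]
            exact hN.norm_smul_one_sub_mulVec_le hα.le v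
    exact lt_of_mul_lt_mul_right hlt (norm_nonneg _)

end Matrix

theorem tendsto_pow_atTop_nhds_zero_of_spectralRadius_lt_one {A : Type*} [NormedRing A]
    [NormedAlgebra ℂ A] [CompleteSpace A] {a : A} (ha : spectralRadius ℂ a < 1) :
    Tendsto (a ^ ·) atTop (𝓝 0) := by
  obtain ⟨r, hρr, hr1⟩ := ENNReal.lt_iff_exists_nnreal_btwn.mp ha
  have hroot : ∀ᶠ k : ℕ in atTop, (‖a ^ k‖₊ : ℝ≥0∞) ^ (1 / k : ℝ) < r :=
    (spectrum.pow_nnnorm_pow_one_div_tendsto_nhds_spectralRadius a).eventually_lt_const hρr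
  have hbound : ∀ᶠ k : ℕ in atTop, ‖a ^ k‖ ≤ (r : ℝ) ^ k := by
    filter_upwards [hroot, eventually_gt_atTop 0] with k hk hk0
    rw [← ENNReal.coe_rpow_of_nonneg _ (by positivity), ENNReal.coe_lt_coe, one_div,
      NNReal.rpow_inv_lt_iff (by positivity), NNReal.rpow_natCast] at hk
    exact_mod_cast hk.le
  refine squeeze_zero_norm' hbound (tendsto_pow_atTop_nhds_zero_of_lt_one r.2 ?_)
  exact_mod_cast hr1

namespace Matrix

section Spectral

variable {ι : Type*} [Fintype ι] [DecidableEq ι]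

theorem spectralRadius_lt_one_of_forall (T : Matrix ι ι ℂ) (h : ∀ z ∈ spectrum ℂ T, ‖z‖ < 1) :
    spectralRadius ℂ T < 1 := by
  let := Matrix.linftyOpNormedRing (n := ι) (α := ℂ)
  let := Matrix.linftyOpNormedAlgebra (n := ι) (α := ℂ) (R := ℂ)
  have := FiniteDimensional.complete ℂ (Matrix ι ι ℂ)
  rcases (spectrum ℂ T).eq_empty_or_nonempty with h0 | hne
  · simp [spectralRadius, h0]
  · exact_mod_cast spectrum.spectralRadius_lt_of_forall_lt_of_nonempty hne (r := 1)
      fun z hz => by exact_mod_cast h z hz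

theorem tendsto_pow_atTop_nhds_zero_of_spectralRadius_lt_one {T : Matrix ι ι ℂ}
    (hT : spectralRadius ℂ T < 1) : Tendsto (T ^ ·) atTop (𝓝 0) := by
  let := Matrix.linftyOpNormedRing (n := ι) (α := ℂ)
  let := Matrix.linftyOpNormedAlgebra (n := ι) (α := ℂ) (R := ℂ)
  have := FiniteDimensional.complete ℂ (Matrix ι ι ℂ)
  exact _root_.tendsto_pow_atTop_nhds_zero_of_spectralRadius_lt_one hT

theorem exists_mulVec_eq_smul_of_mem_spectrum {K : Type*} [Field K] {T : Matrix ι ι K} {z : K}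
    (hz : z ∈ spectrum K T) :
    ∃ v : ι → K, v ≠ 0 ∧ T *ᵥ v = z • v := by
  rw [← spectrum_toLin'] at hz
  obtain ⟨v, hv⟩ := (Module.End.HasEigenvalue.of_mem_spectrum hz).exists_hasEigenvector
  exact ⟨v, hv.2, by simpa using hv.apply_eq_smul⟩

theorem iterate_mulVec_add_eq {R : Type*} [Ring R] (T : Matrix ι ι R) {d x : ι → R}
    (hx : T *ᵥ x + d = x) (x₀ : ι → R) (k : ℕ) :
    (fun y => T *ᵥ y + d)^[k] x₀ = (T ^ k) *ᵥ (x₀ - x) + x := by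
  induction k with
  | zero => simp
  | succ k ih =>
    rw [Function.iterate_succ_apply', ih, mulVec_add, mulVec_mulVec, ← pow_succ', add_assoc, hx]

theorem tendsto_iterate_mulVec_add {R : Type*} [Ring R] [TopologicalSpace R]
    [IsTopologicalRing R] {T : Matrix ι ι R}
    (hT : Tendsto (T ^ ·) atTop (𝓝 0)) {d x : ι → R} (hx : T *ᵥ x + d = x) (x₀ : ι → R) :
    Tendsto (fun k => (fun y => T *ᵥ y + d)^[k] x₀) atTop (𝓝 x) := by
  simp_rw [iterate_mulVec_add_eq T hx]
  have hpow : Tendsto (fun k => (T ^ k) *ᵥ (x₀ - x)) atTop (𝓝 (0 *ᵥ (x₀ - x))) :=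
    ((continuous_id.matrix_mulVec continuous_const).tendsto 0).comp hT
  simpa using hpow.add_const x

end Spectral

end Matrix

theorem gadi_splitting {R : Type*} [Ring R] [Algebra ℂ R] (M N : R) (α ω : ℝ) :
    ((α : ℂ) ^ 2) • (1 : R) + M * N - (((1 - ω) * α : ℝ) : ℂ) • (M + N)
      = ((1 - ω / 2 : ℝ) : ℂ) • (((α : ℂ) • 1 - M) * ((α : ℂ) • 1 - N))
        + ((ω / 2 : ℝ) : ℂ) • (((α : ℂ) • 1 + M) * ((α : ℂ) • 1 + N)) := by
  simp only [mul_add, add_mul, mul_sub, sub_mul, smul_mul_assoc, mul_smul_comm, mul_one, one_mul]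
  push_cast
  module

theorem gadi_splitting_sub {R : Type*} [Ring R] [Algebra ℂ R] (M N : R) (α ω : ℝ) :
    ((α : ℂ) ^ 2) • (1 : R) + M * N - (((1 - ω) * α : ℝ) : ℂ) • (M + N)
      = ((α : ℂ) • 1 + M) * ((α : ℂ) • 1 + N) - (((2 - ω) * α : ℝ) : ℂ) • (M + N) := by
  simp only [mul_add, add_mul, smul_mul_assoc, mul_smul_comm, mul_one, one_mul]
  push_cast
  module

section GADI

variable {n : ℕ} {M N : Matrix (Fin n) (Fin n) ℂ} {α ω : ℝ}

theorem mul_gadiTF (hH : IsUnit ((α : ℂ) • 1 + M).det) (hS : IsUnit ((α : ℂ) • 1 + N).det) :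
    ((α : ℂ) • 1 + M) * ((α : ℂ) • 1 + N) * gadiTF M N α ω
      = ((α : ℂ) ^ 2) • 1 + M * N - (((1 - ω) * α : ℝ) : ℂ) • (M + N) := by
  simp only [gadiTF, mul_assoc, mul_nonsing_inv_cancel_left _ _ hS,
    mul_nonsing_inv_cancel_left _ _ hH]

theorem gadiTF_eq_one_sub (hH : IsUnit ((α : ℂ) • 1 + M).det)
    (hS : IsUnit ((α : ℂ) • 1 + N).det) :
    gadiTF M N α ω = 1 - (((2 - ω) * α : ℝ) : ℂ) •
      (((α : ℂ) • 1 + N)⁻¹ * ((α : ℂ) • 1 + M)⁻¹ * (M + N)) := by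
  rw [gadiTF, gadi_splitting_sub, mul_sub, mul_smul_comm]
  simp only [mul_assoc, nonsing_inv_mul_cancel_left _ _ hH, nonsing_inv_mul _ hS]

theorem gadiTF_mulVec_add_eq_self (hH : IsUnit ((α : ℂ) • 1 + M).det)
    (hS : IsUnit ((α : ℂ) • 1 + N).det) {x b : Fin n → ℂ} (hx : (M + N) *ᵥ x = b) :
    gadiTF M N α ω *ᵥ x
      + (((2 - ω) * α : ℝ) : ℂ) • ((((α : ℂ) • 1 + N)⁻¹ * ((α : ℂ) • 1 + M)⁻¹) *ᵥ b) = x := by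
  rw [gadiTF_eq_one_sub hH hS, sub_mulVec, one_mulVec, smul_mulVec, ← mulVec_mulVec, hx,
    sub_add_cancel]

theorem norm_lt_one_of_mem_spectrum_gadiTF (hM : M.IsStrictlyAccretive) (hN : N.IsAccretive)
    (hα : 0 < α) (hω : ω ∈ Ico (0 : ℝ) 2) {z : ℂ} (hz : z ∈ spectrum ℂ (gadiTF M N α ω)) :
    ‖z‖ < 1 := by
  obtain ⟨v, hv, hTv⟩ := exists_mulVec_eq_smul_of_mem_spectrum hz
  have hc : 0 < 1 - ω / 2 := by linarith [hω.2]
  have hK := congrArg (· *ᵥ v) (mul_gadiTF (α := α) (ω := ω)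
    (hM.isAccretive.smul_one_add hα).isUnit_det (hN.smul_one_add hα).isUnit_det)
  rw [← mulVec_mulVec, hTv, mulVec_smul, gadi_splitting, add_mulVec, smul_mulVec,
    smul_mulVec] at hK
  set μ := (z - ((ω / 2 : ℝ) : ℂ)) / ((1 - ω / 2 : ℝ) : ℂ) with hμ_def
  have hμ : ((((α : ℂ) • 1 - M) * ((α : ℂ) • 1 - N))) *ᵥ v
      = μ • ((((α : ℂ) • 1 + M) * ((α : ℂ) • 1 + N)) *ᵥ v) := by
    rw [hμ_def, div_eq_inv_mul, mul_smul, sub_smul, hK, add_sub_cancel_right, smul_smul,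
      inv_mul_cancel₀ (by exact_mod_cast hc.ne'), one_smul]
  have hμ1 : ‖μ‖ < 1 := adi_eigenvalue_norm_lt_one hM hN hα hv hμ
  calc ‖z‖ = ‖((1 - ω / 2 : ℝ) : ℂ) * μ + ((ω / 2 : ℝ) : ℂ)‖ := by
        rw [mul_div_cancel₀ _ (by exact_mod_cast hc.ne'), sub_add_cancel]
    _ ≤ (1 - ω / 2) * ‖μ‖ + ω / 2 := by
        refine (norm_add_le _ _).trans_eq ?_
        rw [norm_mul, Complex.norm_real, Complex.norm_real, Real.norm_of_nonneg hc.le,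
          Real.norm_of_nonneg (by linarith [hω.1])]
    _ < 1 := by nlinarith

theorem spectralRadius_gadiTF_lt_one (hM : M.IsStrictlyAccretive) (hN : N.IsAccretive)
    (hα : 0 < α) (hω : ω ∈ Ico (0 : ℝ) 2) : spectralRadius ℂ (gadiTF M N α ω) < 1 :=
  spectralRadius_lt_one_of_forall _ fun _ hz => norm_lt_one_of_mem_spectrum_gadiTF hM hN hα hω hz

end GADI

/-- **Convergence of GADI (Lemma 2.2).** If `M` is Hermitian positive definite and `N` is
Hermitian positive semidefinite or skew-Hermitian, then for any `α > 0` and `ω ∈ [0,2)`,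
the matrices `A = M + N`, `H = α I + M`, `S = α I + N` are invertible, the GADI iteration
matrix has spectral radius `< 1`, and the GADI iterates converge to the unique solution
of `A x = b` for every `b` and every starting vector. -/
theorem gadi_convergence {n : ℕ} (M N A H S : Matrix (Fin n) (Fin n) ℂ)
    (hA : A = M + N) (α ω : ℝ) (hα : 0 < α) (hω : ω ∈ Set.Ico (0 : ℝ) 2)
    (hH : H = (α : ℂ) • 1 + M) (hS : S = (α : ℂ) • 1 + N)
    (hM : M.PosDef) (hN : N.PosSemidef ∨ Nᴴ = -N) :
    IsUnit A.det ∧ IsUnit H.det ∧ IsUnit S.det ∧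
      spectralRadius ℂ (gadiTF M N α ω) < 1 ∧
      ∀ b : Fin n → ℂ,
        (∃! x : Fin n → ℂ, A *ᵥ x = b) ∧
        A *ᵥ (A⁻¹ *ᵥ b) = b ∧
        ∀ x₀ : Fin n → ℂ,
          Tendsto
            (fun k : ℕ =>
              (fun y : Fin n → ℂ =>
                  gadiTF M N α ω *ᵥ y +
                    (((2 - ω) * α : ℝ) : ℂ) • ((S⁻¹ * H⁻¹) *ᵥ b))^[k] x₀)
            atTop (nhds (A⁻¹ *ᵥ b)) := by
  subst hA hH hS
  have hM' := hM.isStrictlyAccretive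
  have hN' : N.IsAccretive := hN.elim PosSemidef.isAccretive isAccretive_of_conjTranspose_eq_neg
  have hAdet := (hM'.add hN').isUnit_det
  have hHdet : IsUnit ((α : ℂ) • 1 + M).det := (hM'.isAccretive.smul_one_add hα).isUnit_det
  have hSdet : IsUnit ((α : ℂ) • 1 + N).det := (hN'.smul_one_add hα).isUnit_det
  have hρ := spectralRadius_gadiTF_lt_one hM' hN' hα hω
  refine ⟨hAdet, hHdet, hSdet, hρ, fun b => ?_⟩
  have hsol : (M + N) *ᵥ ((M + N)⁻¹ *ᵥ b) = b := by
    rw [mulVec_mulVec, mul_nonsing_inv _ hAdet, one_mulVec]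
  refine ⟨⟨_, hsol, fun x hx => ?_⟩, hsol, fun x₀ => ?_⟩
  · rw [← hx, mulVec_mulVec, nonsing_inv_mul _ hAdet, one_mulVec]
  · exact tendsto_iterate_mulVec_add
      (Matrix.tendsto_pow_atTop_nhds_zero_of_spectralRadius_lt_one hρ)
      (gadiTF_mulVec_add_eq_self hHdet hSdet hsol) x₀
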